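/- Let f = x^2 - 1 over Z and f^m its m-th iterate. Then for every m ≥ 1, the discriminant of f^m - 1 is, up to sign, a power of 2. -/

import Mathlib

open Polynomial

/-- The iterates of `f = X^2 - 1` in `ℤ[X]`. -/
noncomputable def fIter : ℕ → Polynomial ℤ
  | 0 => X
  | m + 1 => (fIter m) ^ 2 - 1

/-- The discriminant of a monic integer polynomial, computed via its complex roots:
`disc g = (-1)^(d(d-1)/2) * ∏_i g'(rᵢ)`. -/
noncomputable def intDisc (g : Polynomial ℤ) : ℂ :=
  (-1) ^ (g.natDegree * (g.natDegree - 1) / 2) *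
    (((g.map (Int.castRingHom ℂ)).roots.map
      fun r => ((g.map (Int.castRingHom ℂ)).derivative).eval r).prod)

lemma fIter_monic (m : ℕ) : (fIter m).Monic ∧ (fIter m).natDegree = 2 ^ m := by
  induction m with
  | zero => exact ⟨monic_X, natDegree_X⟩
  | succ n ih =>
    obtain ⟨h1, h2⟩ := ih
    have hpow : ((fIter n) ^ 2).Monic := h1.pow 2
    have hdeg : ((fIter n) ^ 2).natDegree = 2 ^ (n + 1) := by
      rw [h1.natDegree_pow, h2]; ring
    have hlt : (1 : Polynomial ℤ).degree < ((fIter n) ^ 2).natDegree := by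
      rw [hdeg]
      calc (1 : Polynomial ℤ).degree ≤ 0 := degree_one_le
        _ < (2 ^ (n+1) : ℕ) := by exact_mod_cast WithBot.coe_lt_coe.mpr (by positivity)
    have hlt' : (1 : Polynomial ℤ).degree < ((fIter n) ^ 2).degree := by
      rw [degree_eq_natDegree hpow.ne_zero]; exact hlt
    constructor
    · exact hpow.sub_of_left hlt'
    · show ((fIter n) ^ 2 - 1).natDegree = _
      rw [← hdeg]
      exact natDegree_sub_eq_left_of_natDegree_lt
        (natDegree_lt_natDegree one_ne_zero hlt')

lemma fIter_add (a b : ℕ) : fIter (a + b) = (fIter a).comp (fIter b) := by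
  induction a with
  | zero => simp [fIter]
  | succ n ih =>
    have key : fIter (n + 1 + b) = fIter ((n + b) + 1) := by rw [Nat.add_right_comm]
    rw [key]
    show (fIter (n + b)) ^ 2 - 1 = (fIter (n + 1)).comp (fIter b)
    show _ = ((fIter n) ^ 2 - 1).comp (fIter b)
    rw [ih, sub_comp, pow_comp, one_comp]

lemma fIter_eval_zero (j : ℕ) : (fIter j).eval 0 = 0 ∨ (fIter j).eval 0 = -1 := by
  induction j with
  | zero => left; simp [fIter]
  | succ n ih =>
    rcases ih with h | h
    · right; simp [fIter, h]
    · left; simp [fIter, h]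

lemma fIter_deriv (m : ℕ) :
    derivative (fIter m) = ∏ k ∈ Finset.range m, (2 * fIter k) := by
  induction m with
  | zero => simp [fIter]
  | succ n ih =>
    show derivative ((fIter n) ^ 2 - 1) = _
    rw [derivative_sub, derivative_one, derivative_pow, ih, Finset.prod_range_succ]
    rw [sub_zero, pow_one]
    have h2 : (C ((2 : ℕ) : ℤ) : Polynomial ℤ) = 2 := by simp
    rw [h2]
    ring

/-- "z is plus or minus a power of two". -/
def PMTwoPow (z : ℂ) : Prop := ∃ e : ℕ, z = 2 ^ e ∨ z = -(2 ^ e)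

lemma PMTwoPow.mul {a b : ℂ} (ha : PMTwoPow a) (hb : PMTwoPow b) : PMTwoPow (a * b) := by
  obtain ⟨e, he⟩ := ha
  obtain ⟨f, hf⟩ := hb
  refine ⟨e + f, ?_⟩
  rcases he with h | h <;> rcases hf with h' | h' <;> subst h <;> subst h' <;>
    [left; right; right; left] <;> rw [pow_add] <;> ring

lemma PMTwoPow.one : PMTwoPow (1 : ℂ) := ⟨0, Or.inl (by norm_num)⟩

lemma PMTwoPow.pow {a : ℂ} (ha : PMTwoPow a) (n : ℕ) : PMTwoPow (a ^ n) := by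
  induction n with
  | zero => simpa using PMTwoPow.one
  | succ k ih => rw [pow_succ]; exact ih.mul ha

lemma multiset_map_finset_prod {A : Multiset ℂ} {s : Finset ℕ} (h : ℕ → ℂ → ℂ) :
    (A.map fun r => ∏ k ∈ s, h k r).prod = ∏ k ∈ s, (A.map (h k)).prod := by
  classical
  induction s using Finset.induction with
  | empty => simp
  | insert _ _ hx ih =>
    rw [Finset.prod_insert hx]
    simp only [Finset.prod_insert hx, ← ih, ← Multiset.prod_map_mul]

lemma multiset_prod_swap {A B : Multiset ℂ} (f : ℂ → ℂ → ℂ) :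
    (A.map fun r => (B.map fun s => f r s).prod).prod
      = (B.map fun s => (A.map fun r => f r s).prod).prod := by
  induction A using Multiset.induction with
  | empty => simp
  | cons a A ih => simp [Multiset.prod_map_mul, ih]

lemma multiset_map_const_mul {A : Multiset ℂ} (c : ℂ) (h : ℂ → ℂ) :
    (A.map fun r => c * h r).prod = c ^ Multiset.card A * (A.map h).prod := by
  rw [Multiset.prod_map_mul]
  congr 1
  simp [Multiset.map_const']

noncomputable def Fc (k : ℕ) : Polynomial ℂ := (fIter k).map (Int.castRingHom ℂ)

lemma Fc_monic (k : ℕ) : (Fc k).Monic := ((fIter_monic k).1).map _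

lemma Fc_natDegree (k : ℕ) : (Fc k).natDegree = 2 ^ k := by
  rw [Fc, (fIter_monic k).1.natDegree_map]; exact (fIter_monic k).2

lemma Fc_card_roots (k : ℕ) : Multiset.card (Fc k).roots = 2 ^ k := by
  rw [splits_iff_card_roots.mp (IsAlgClosed.splits (Fc k)), Fc_natDegree]

lemma Fc_eq_prod (k : ℕ) : ((Fc k).roots.map fun s => X - C s).prod = Fc k :=
  prod_multiset_X_sub_C_of_monic_of_roots_card_eq (Fc_monic k)
    (by rw [Fc_card_roots, Fc_natDegree])

lemma gIter_monic (m : ℕ) : (fIter m - 1).Monic ∧ (fIter m - 1).natDegree = 2 ^ m := by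
  obtain ⟨h1, h2⟩ := fIter_monic m
  have hlt : (1 : Polynomial ℤ).degree < (fIter m).degree := by
    rw [degree_eq_natDegree h1.ne_zero, h2]
    calc (1 : Polynomial ℤ).degree ≤ 0 := degree_one_le
      _ < ((2 ^ m : ℕ) : WithBot ℕ) := by exact_mod_cast WithBot.coe_lt_coe.mpr (by positivity)
  refine ⟨h1.sub_of_left hlt, ?_⟩
  rw [← h2]
  exact natDegree_sub_eq_left_of_natDegree_lt (natDegree_lt_natDegree one_ne_zero hlt)

lemma Gc_monic (m : ℕ) : ((fIter m - 1).map (Int.castRingHom ℂ)).Monic :=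
  (gIter_monic m).1.map _

lemma Gc_card_roots (m : ℕ) :
    Multiset.card ((fIter m - 1).map (Int.castRingHom ℂ)).roots = 2 ^ m := by
  rw [splits_iff_card_roots.mp (IsAlgClosed.splits _),
    (gIter_monic m).1.natDegree_map]
  exact (gIter_monic m).2

lemma Gc_eq_prod (m : ℕ) :
    (((fIter m - 1).map (Int.castRingHom ℂ)).roots.map fun s => X - C s).prod
      = (fIter m - 1).map (Int.castRingHom ℂ) :=
  prod_multiset_X_sub_C_of_monic_of_roots_card_eq (Gc_monic m)
    (by rw [Gc_card_roots, (gIter_monic m).1.natDegree_map, (gIter_monic m).2])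

lemma cross (m k : ℕ) (hm : 1 ≤ m) (hk : k < m) :
    PMTwoPow ((((fIter m - 1).map (Int.castRingHom ℂ)).roots.map
      fun r => (Fc k).eval r).prod) := by
  set g : Polynomial ℂ := (fIter m - 1).map (Int.castRingHom ℂ) with hgdef
  set A := g.roots with hA
  set B := (Fc k).roots with hB
  have h1 : ∀ r : ℂ, (Fc k).eval r = (B.map fun s => r - s).prod := by
    intro r
    conv_lhs => rw [← Fc_eq_prod k]
    rw [eval_multiset_prod, Multiset.map_map]
    simp
    rfl
  have h2 : (A.map fun r => (Fc k).eval r).prod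
      = (B.map fun s => (A.map fun r => r - s).prod).prod := by
    rw [Multiset.map_congr rfl (fun r _ => h1 r)]
    exact multiset_prod_swap _
  have hcardA : Multiset.card A = 2 ^ m := Gc_card_roots m
  have hevenA : Even (2 ^ m) := ⟨2 ^ (m - 1), by rw [← two_mul, ← pow_succ']; congr 1; omega⟩
  have h3 : ∀ s : ℂ, (A.map fun r => r - s).prod = g.eval s := by
    intro s
    have : (A.map fun r => r - s).prod = (A.map fun r => (-1) * (s - r)).prod := by
      congr 1; exact Multiset.map_congr rfl (fun r _ => by ring)
    rw [this, multiset_map_const_mul, hcardA, hevenA.neg_one_pow, one_mul]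
    conv_rhs => rw [hgdef]
    conv_rhs => rw [← Gc_eq_prod m]
    rw [eval_multiset_prod, Multiset.map_map]
    simp [hA, hgdef]
  -- value of g at a root of Fc k
  set c : ℂ := (((fIter (m - k)).eval 0 : ℤ) : ℂ) - 1 with hc
  have h4 : ∀ s ∈ B, g.eval s = c := by
    intro s hs
    have hroot : (Fc k).eval s = 0 := isRoot_of_mem_roots hs
    have hsplit : fIter m = (fIter (m - k)).comp (fIter k) := by
      rw [← fIter_add]; congr 1; omega
    have : g = (Fc (m - k)).comp (Fc k) - 1 := by
      rw [hgdef, Polynomial.map_sub, Polynomial.map_one, hsplit, Polynomial.map_comp]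
      rfl
    rw [this, eval_sub, eval_one, eval_comp, hroot, Fc, eval_map]
    rw [hc]
    congr 1
    rw [eval₂_at_zero]
    norm_num [coeff_zero_eq_eval_zero]
  have h5 : (A.map fun r => (Fc k).eval r).prod = c ^ (2 ^ k) := by
    rw [h2, Multiset.map_congr rfl (fun s hs => by rw [h3 s, h4 s hs])]
    rw [Multiset.map_const', Multiset.prod_replicate, hB, Fc_card_roots]
  rw [h5]
  have hcpm : PMTwoPow c := by
    rcases fIter_eval_zero (m - k) with h | h
    · exact ⟨0, Or.inr (by rw [hc, h]; norm_num)⟩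
    · exact ⟨1, Or.inr (by rw [hc, h]; norm_num)⟩
  exact hcpm.pow _

lemma PMTwoPow.neg {a : ℂ} (ha : PMTwoPow a) : PMTwoPow (-a) := by
  obtain ⟨e, h | h⟩ := ha
  · exact ⟨e, Or.inr (by rw [h])⟩
  · exact ⟨e, Or.inl (by rw [h, neg_neg])⟩

theorem disc_fIter_sub_one_power_of_two (m : ℕ) (hm : 1 ≤ m) :
    ∃ e : ℕ, intDisc (fIter m - 1) = 2 ^ e ∨ intDisc (fIter m - 1) = -(2 ^ e) := by
  suffices h : PMTwoPow (intDisc (fIter m - 1)) from h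
  rw [intDisc]
  set g : Polynomial ℂ := (fIter m - 1).map (Int.castRingHom ℂ) with hgdef
  set A := g.roots with hA
  have hderiv : derivative g = ∏ k ∈ Finset.range m, ((2 : Polynomial ℂ) * Fc k) := by
    rw [hgdef, derivative_map, derivative_sub, derivative_one, sub_zero, fIter_deriv,
      Polynomial.map_prod]
    refine Finset.prod_congr rfl fun k _ => ?_
    rw [Polynomial.map_mul]
    norm_num [Fc]
  have hP : (A.map fun r => (derivative g).eval r).prod
      = ∏ k ∈ Finset.range m,
          ((2 : ℂ) ^ Multiset.card A * (A.map fun r => (Fc k).eval r).prod) := by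
    have hfun : ∀ r ∈ A, (derivative g).eval r
        = ∏ k ∈ Finset.range m, ((2 : ℂ) * (Fc k).eval r) := by
      intro r _
      rw [hderiv, eval_prod]
      exact Finset.prod_congr rfl fun k _ => by rw [eval_mul]; norm_num
    rw [Multiset.map_congr rfl hfun]
    rw [multiset_map_finset_prod (fun k r => (2 : ℂ) * (Fc k).eval r)]
    exact Finset.prod_congr rfl fun k _ => multiset_map_const_mul 2 _
  have hPfinal : PMTwoPow (A.map fun r => (derivative g).eval r).prod := by
    rw [hP]
    refine Finset.prod_induction _ _ (fun a b ha hb => ha.mul hb) PMTwoPow.one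
      fun k hk => PMTwoPow.mul ⟨Multiset.card A, Or.inl rfl⟩
      (cross m k hm (Finset.mem_range.mp hk))
  rcases Nat.even_or_odd ((fIter m - 1).natDegree * ((fIter m - 1).natDegree - 1) / 2)
    with h | h
  · rw [h.neg_one_pow, one_mul]; exact hPfinal
  · rw [h.neg_one_pow, neg_one_mul]; exact hPfinal.neg
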